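/- Weighted Nash-type inequality: there exists C > 0 such that for every α ≥ 0 and every smooth compactly supported g : ℝ³ → ℝ, ‖⟨v⟩^α g‖_{L²} ≤ C ‖∇g‖_{L²}^{3/5} ‖⟨v⟩^{5α/2} g‖_{L¹}^{2/5}. -/

import Mathlib

open MeasureTheory
open scoped ENNReal NNReal

/-- The Japanese bracket `⟨v⟩ = (1+|v|²)^{1/2}`. -/
noncomputable def jap {d : ℕ} (v : EuclideanSpace ℝ (Fin d)) : ℝ :=
  Real.sqrt (1 + ‖v‖ ^ 2)

lemma jap_pos {d : ℕ} (v : EuclideanSpace ℝ (Fin d)) : 0 < jap v :=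
  Real.sqrt_pos.2 (by positivity)

lemma jap_continuous {d : ℕ} : Continuous (jap (d := d)) :=
  (continuous_const.add (continuous_norm.pow 2)).sqrt

/-- Sobolev embedding `‖g‖_{L⁶} ≤ C ‖∇g‖_{L²}` on ℝ³, in `eLpNorm` form. -/
lemma sobolev_L6 : ∃ C₀ : NNReal, ∀ g : EuclideanSpace ℝ (Fin 3) → ℝ,
    ContDiff ℝ (⊤ : ℕ∞) g → HasCompactSupport g →
    eLpNorm g 6 volume ≤ C₀ * eLpNorm (fderiv ℝ g) 2 volume := by
  refine ⟨eLpNormLESNormFDerivOfEqInnerConst (volume : Measure (EuclideanSpace ℝ (Fin 3))) 2,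
    fun g hg h2g => ?_⟩
  have h := eLpNorm_le_eLpNorm_fderiv_of_eq_inner
    (volume : Measure (EuclideanSpace ℝ (Fin 3))) (u := g)
    (hg.of_le (by simp)) h2g (p := 2) (p' := 6) one_le_two
    (by simp [finrank_euclideanSpace]) (by rw [finrank_euclideanSpace]; norm_num)
  simpa using h

set_option maxHeartbeats 2000000 in
/-- Weighted Nash-type inequality on ℝ³:
`‖⟨v⟩^α g‖_{L²} ≤ C ‖∇g‖_{L²}^{3/5} ‖⟨v⟩^{5α/2} g‖_{L¹}^{2/5}`
for smooth compactly supported `g`, with `C` independent of `α ≥ 0` and `g`. -/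
theorem weighted_nash_inequality :
    ∃ C : ℝ, 0 < C ∧ ∀ α : ℝ, 0 ≤ α →
      ∀ g : EuclideanSpace ℝ (Fin 3) → ℝ, ContDiff ℝ (⊤ : ℕ∞) g → HasCompactSupport g →
      (∫ v, (jap v ^ α * g v) ^ 2) ^ ((1 : ℝ) / 2)
        ≤ C * ((∫ v, ‖fderiv ℝ g v‖ ^ 2) ^ ((1 : ℝ) / 2)) ^ ((3 : ℝ) / 5)
            * (∫ v, jap v ^ (5 * α / 2) * |g v|) ^ ((2 : ℝ) / 5) := by
  obtain ⟨C₀, hC₀⟩ := sobolev_L6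
  set c : ℝ := max (C₀ : ℝ) 1 with hc
  have hc1 : (1 : ℝ) ≤ c := le_max_right _ _
  have hc0 : (0 : ℝ) < c := lt_of_lt_of_le one_pos hc1
  refine ⟨c, hc0, fun α hα g hg h2g => ?_⟩
  have hgc : Continuous g := hg.continuous
  -- Notation
  set h1 : EuclideanSpace ℝ (Fin 3) → ℝ := fun v => |g v| ^ ((6 : ℝ) / 5) with hh1
  set h2 : EuclideanSpace ℝ (Fin 3) → ℝ :=
    fun v => (jap v ^ (5 * α / 2) * |g v|) ^ ((4 : ℝ) / 5) with hh2
  -- continuity / compact support facts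
  have hjw : Continuous fun v : EuclideanSpace ℝ (Fin 3) => jap v ^ (5 * α / 2) :=
    jap_continuous.rpow_const fun v => Or.inl (jap_pos v).ne'
  have habs : HasCompactSupport fun v : EuclideanSpace ℝ (Fin 3) => |g v| :=
    h2g.comp_left (abs_zero)
  have hcs1 : HasCompactSupport h1 := by
    have : h1 = (fun x : ℝ => |x| ^ ((6 : ℝ) / 5)) ∘ g := rfl
    rw [this]
    exact h2g.comp_left (by simp)
  have hcs2' : HasCompactSupport fun v => jap v ^ (5 * α / 2) * |g v| := habs.mul_left
  have hcs2 : HasCompactSupport h2 := by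
    have : h2 = (fun x : ℝ => x ^ ((4 : ℝ) / 5)) ∘
        fun v => jap v ^ (5 * α / 2) * |g v| := rfl
    rw [this]
    exact hcs2'.comp_left (by simp)
  have hcont1 : Continuous h1 := hgc.abs.rpow_const fun v => Or.inr (by norm_num)
  have hcont2 : Continuous h2 :=
    (hjw.mul hgc.abs).rpow_const fun v => Or.inr (by norm_num)
  have hmem1 : MemLp h1 (ENNReal.ofReal 5) volume :=
    hcont1.memLp_of_hasCompactSupport hcs1
  have hmem2 : MemLp h2 (ENNReal.ofReal (5 / 4)) volume :=
    hcont2.memLp_of_hasCompactSupport hcs2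
  -- nonnegativity of key quantities
  set L : ℝ := ∫ v, (jap v ^ α * g v) ^ 2 with hL
  set A : ℝ := ∫ v, ‖fderiv ℝ g v‖ ^ 2 with hA
  set B : ℝ := ∫ v, jap v ^ (5 * α / 2) * |g v| with hB
  set S : ℝ := ∫ v, |g v| ^ ((6 : ℝ)) with hS
  have hLnn : 0 ≤ L := integral_nonneg fun v => sq_nonneg _
  have hAnn : 0 ≤ A := integral_nonneg fun v => sq_nonneg _
  have hBnn : 0 ≤ B := integral_nonneg fun v =>
    mul_nonneg (Real.rpow_nonneg (jap_pos v).le _) (abs_nonneg _)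
  have hSnn : 0 ≤ S := integral_nonneg fun v => Real.rpow_nonneg (abs_nonneg _) _
  -- Hölder's inequality: L ≤ S^{1/5} * B^{4/5}
  have holder : L ≤ S ^ ((1 : ℝ) / 5) * B ^ ((4 : ℝ) / 5) := by
    have hpq : Real.HolderConjugate 5 (5 / 4) := by
      constructor <;> norm_num
    have h := integral_mul_le_Lp_mul_Lq_of_nonneg (μ := volume) hpq
      (f := h1) (g := h2)
      (Filter.Eventually.of_forall fun v => Real.rpow_nonneg (abs_nonneg _) _)
      (Filter.Eventually.of_forall fun v => Real.rpow_nonneg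
        (mul_nonneg (Real.rpow_nonneg (jap_pos v).le _) (abs_nonneg _)) _)
      hmem1 hmem2
    have e1 : ∫ v, h1 v * h2 v = L := by
      refine integral_congr_ae (Filter.Eventually.of_forall fun v => ?_)
      have hj : (0 : ℝ) ≤ jap v := (jap_pos v).le
      have hx : (0 : ℝ) ≤ |g v| := abs_nonneg _
      have l1 : (jap v ^ (5 * α / 2) * |g v|) ^ ((4 : ℝ) / 5)
          = jap v ^ (2 * α) * |g v| ^ ((4 : ℝ) / 5) := by
        rw [Real.mul_rpow (Real.rpow_nonneg hj _) hx, ← Real.rpow_mul hj]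
        ring_nf
      have l2 : |g v| ^ ((6 : ℝ) / 5) * |g v| ^ ((4 : ℝ) / 5) = g v ^ 2 := by
        rw [← Real.rpow_add' hx (by norm_num), show (6 : ℝ) / 5 + 4 / 5 = 2 by norm_num,
          Real.rpow_two, sq_abs]
      have l3 : (jap v ^ α * g v) ^ 2 = jap v ^ (2 * α) * g v ^ 2 := by
        rw [mul_pow, ← Real.rpow_natCast (jap v ^ α) 2, ← Real.rpow_mul hj]
        norm_num [mul_comm]
      calc h1 v * h2 v
          = jap v ^ (2 * α) * (|g v| ^ ((6 : ℝ) / 5) * |g v| ^ ((4 : ℝ) / 5)) := by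
            simp only [hh1, hh2]; rw [l1]; ring
        _ = (jap v ^ α * g v) ^ 2 := by rw [l2, l3]
    have e2 : ∫ v, h1 v ^ (5 : ℝ) = S := by
      refine integral_congr_ae (Filter.Eventually.of_forall fun v => ?_)
      simp only [hh1]
      rw [← Real.rpow_mul (abs_nonneg _)]
      norm_num
    have e3 : ∫ v, h2 v ^ ((5 : ℝ) / 4) = B := by
      refine integral_congr_ae (Filter.Eventually.of_forall fun v => ?_)
      simp only [hh2]
      rw [← Real.rpow_mul (mul_nonneg (Real.rpow_nonneg (jap_pos v).le _) (abs_nonneg _))]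
      norm_num
    rw [e1, e2, e3] at h
    convert h using 3 <;> norm_num
  -- Sobolev embedding, real form: S^{1/6} ≤ c * A^{1/2}
  have hmem6 : MemLp g 6 volume := hgc.memLp_of_hasCompactSupport h2g
  have hmemD : MemLp (fderiv ℝ g) 2 volume :=
    (hg.continuous_fderiv (by simp)).memLp_of_hasCompactSupport (h2g.fderiv (𝕜 := ℝ))
  have sob : S ^ ((1 : ℝ) / 6) ≤ c * A ^ ((1 : ℝ) / 2) := by
    have h := hC₀ g hg h2g
    rw [hmem6.eLpNorm_eq_integral_rpow_norm (by norm_num) (by norm_num),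
      hmemD.eLpNorm_eq_integral_rpow_norm (by norm_num) (by norm_num)] at h
    simp only [ENNReal.toReal_ofNat] at h
    have e6 : ∫ v, ‖g v‖ ^ (6 : ℝ) = S := by
      refine integral_congr_ae (Filter.Eventually.of_forall fun v => ?_)
      simp [Real.norm_eq_abs]
    have e2 : ∫ v, ‖fderiv ℝ g v‖ ^ (2 : ℝ) = A := by
      refine integral_congr_ae (Filter.Eventually.of_forall fun v => ?_)
      simp only []
      rw [show ((2 : ℝ)) = ((2 : ℕ) : ℝ) by norm_num, Real.rpow_natCast]
    rw [e6, e2] at h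
    have h' : S ^ ((6 : ℝ))⁻¹ ≤ (C₀ : ℝ) * A ^ ((2 : ℝ))⁻¹ := by
      rw [← ENNReal.ofReal_coe_nnreal, ← ENNReal.ofReal_mul C₀.coe_nonneg] at h
      exact (ENNReal.ofReal_le_ofReal_iff (by positivity)).1 h
    calc S ^ ((1 : ℝ) / 6) = S ^ ((6 : ℝ))⁻¹ := by norm_num
      _ ≤ (C₀ : ℝ) * A ^ ((2 : ℝ))⁻¹ := h'
      _ ≤ c * A ^ ((1 : ℝ) / 2) := by
          rw [show ((2 : ℝ))⁻¹ = (1 : ℝ) / 2 by norm_num]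
          exact mul_le_mul_of_nonneg_right (le_max_left _ _) (by positivity)
  -- Combine
  have hA2nn : 0 ≤ A ^ ((1 : ℝ) / 2) := Real.rpow_nonneg hAnn _
  calc L ^ ((1 : ℝ) / 2)
      ≤ (S ^ ((1 : ℝ) / 5) * B ^ ((4 : ℝ) / 5)) ^ ((1 : ℝ) / 2) :=
        Real.rpow_le_rpow hLnn holder (by norm_num)
    _ = (S ^ ((1 : ℝ) / 6)) ^ ((3 : ℝ) / 5) * B ^ ((2 : ℝ) / 5) := by
        rw [Real.mul_rpow (Real.rpow_nonneg hSnn _) (Real.rpow_nonneg hBnn _),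
          ← Real.rpow_mul hSnn, ← Real.rpow_mul hBnn, ← Real.rpow_mul hSnn]
        norm_num
    _ ≤ (c * A ^ ((1 : ℝ) / 2)) ^ ((3 : ℝ) / 5) * B ^ ((2 : ℝ) / 5) := by
        gcongr
    _ = c ^ ((3 : ℝ) / 5) * (A ^ ((1 : ℝ) / 2)) ^ ((3 : ℝ) / 5) * B ^ ((2 : ℝ) / 5) := by
        rw [Real.mul_rpow hc0.le hA2nn]
    _ ≤ c * (A ^ ((1 : ℝ) / 2)) ^ ((3 : ℝ) / 5) * B ^ ((2 : ℝ) / 5) := by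
        gcongr
        calc c ^ ((3 : ℝ) / 5) ≤ c ^ (1 : ℝ) :=
              Real.rpow_le_rpow_of_exponent_le hc1 (by norm_num)
          _ = c := Real.rpow_one c
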